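/- arXiv:2210.16749 — 3 statements merged into one kernel-verified Lean document; each statement's English description precedes it below -/
import Mathlib

section
/- Let (X, μ, T) be a measure-preserving system and let x ↦ λₓ be a measurable family of Borel probability measures on X indexed by x ∈ X such that μ = ∫_X λₓ dμ(x) and for every bounded measurable f : X → ℝ, ∫_X f dλₓ equals the conditional expectation E_μ(f | I)(x) for μ-a.e. x, where I is the σ-algebra of T-invariant sets. Then for μ-a.e. x ∈ X, λₓ is T-invariant. -/
open Filter MeasureTheory

/-- The σ-algebra of `T`-invariant measurable sets. -/
def invariantSigma {X : Type*} [MeasurableSpace X] (T : X → X) : MeasurableSpace X where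
  MeasurableSet' s := MeasurableSet s ∧ T ⁻¹' s = s
  measurableSet_empty := ⟨MeasurableSet.empty, rfl⟩
  measurableSet_compl := fun s hs => ⟨hs.1.compl, by rw [Set.preimage_compl, hs.2]⟩
  measurableSet_iUnion := fun f hf =>
    ⟨MeasurableSet.iUnion fun i => (hf i).1, by
      simp only [Set.preimage_iUnion]
      exact Set.iUnion_congr fun i => (hf i).2⟩

open Set in
lemma countable_generatePiSystem' {α : Type*} {S : Set (Set α)} (hS : S.Countable) :
    (generatePiSystem S).Countable := by
  have key : ∀ t ∈ generatePiSystem S, ∃ F : Set (Set α), F.Finite ∧ F ⊆ S ∧ t = ⋂₀ F := by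
    intro t ht
    induction ht with
    | base h => exact ⟨{_}, finite_singleton _, singleton_subset_iff.2 h, by simp⟩
    | inter hs htt _ ihs iht =>
      obtain ⟨F, hF, hFS, rfl⟩ := ihs
      obtain ⟨G, hG, hGS, rfl⟩ := iht
      exact ⟨F ∪ G, hF.union hG, union_subset hFS hGS, (sInter_union F G).symm⟩
  have hsub : generatePiSystem S ⊆ sInter '' {F | F.Finite ∧ F ⊆ S} := by
    intro t ht
    obtain ⟨F, hF, hFS, rfl⟩ := key t ht
    exact ⟨F, ⟨hF, hFS⟩, rfl⟩
  exact ((countable_setOf_finite_subset hS).image _).mono hsub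

/-- Conditional expectation with respect to the invariant σ-algebra is `T`-invariant. -/
lemma condexp_comp_invariant {X : Type*} [MeasurableSpace X]
    (μ : Measure X) [IsProbabilityMeasure μ]
    (T : X → X) (hTm : Measurable T) (hT : MeasurePreserving T μ μ)
    {f : X → ℝ} (hf : Measurable f) {C : ℝ} (hC : ∀ x, |f x| ≤ C) :
    (μ[f | invariantSigma T]) =ᵐ[μ] (μ[f ∘ T | invariantSigma T]) := by
  have hm : invariantSigma T ≤ ‹MeasurableSpace X› := fun s hs => hs.1
  have hfint : Integrable f μ :=
    Integrable.mono' (integrable_const C) hf.aestronglyMeasurable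
      (ae_of_all _ fun x => by simpa using hC x)
  have hfTint : Integrable (f ∘ T) μ :=
    Integrable.mono' (integrable_const C) (hf.comp hTm).aestronglyMeasurable
      (ae_of_all _ fun x => by simpa using hC (T x))
  refine ae_eq_condExp_of_forall_setIntegral_eq hm hfTint
    (fun s _ _ => integrable_condExp.integrableOn) (fun s hs hμs => ?_)
    (stronglyMeasurable_condExp.aestronglyMeasurable)
  rw [setIntegral_condExp hm hfint hs]
  -- ∫ x in s, f x ∂μ = ∫ x in s, (f ∘ T) x ∂μ
  have h1 : ∫ x in s, f x ∂μ = ∫ x, s.indicator f x ∂μ :=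
    (integral_indicator hs.1).symm
  have h2 : ∫ x in s, (f ∘ T) x ∂μ = ∫ x, s.indicator (f ∘ T) x ∂μ :=
    (integral_indicator hs.1).symm
  rw [h1, h2]
  have hind : (s.indicator f) ∘ T = s.indicator (f ∘ T) := by
    funext x
    have hmem : T x ∈ s ↔ x ∈ s := Set.ext_iff.1 hs.2 x
    by_cases hx : x ∈ s <;> simp [Function.comp, Set.indicator, hmem, hx]
  calc ∫ x, s.indicator f x ∂μ
      = ∫ x, s.indicator f x ∂(μ.map T) := by rw [hT.map_eq]
    _ = ∫ x, s.indicator f (T x) ∂μ :=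
        integral_map hTm.aemeasurable
          ((hf.indicator hs.1).aestronglyMeasurable.mono_ac
            (by rw [hT.map_eq]))
    _ = ∫ x, s.indicator (f ∘ T) x ∂μ := by
        rw [← hind]; rfl

theorem stmt4 {X : Type*} [MeasurableSpace X] [StandardBorelSpace X]
    (μ : Measure X) [IsProbabilityMeasure μ]
    (T : X → X) (hTm : Measurable T) (hT : MeasurePreserving T μ μ)
    (lam : X → Measure X) (hlam : Measurable lam) [∀ x, IsProbabilityMeasure (lam x)]
    (hdis : μ.bind lam = μ)
    (hcond : ∀ f : X → ℝ, Measurable f → (∃ C, ∀ x, |f x| ≤ C) →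
      ∀ᵐ x ∂μ, ∫ y, f y ∂(lam x) = (μ[f | invariantSigma T]) x) :
    ∀ᵐ x ∂μ, (lam x).map T = lam x := by
  classical
  -- Step 1: for each measurable set A, a.e. `lam x (T⁻¹' A) = lam x A`.
  have key : ∀ A : Set X, MeasurableSet A → ∀ᵐ x ∂μ, lam x (T ⁻¹' A) = lam x A := by
    intro A hA
    set f : X → ℝ := A.indicator 1 with hf_def
    have hfm : Measurable f := measurable_one.indicator hA
    have hfb : ∃ C, ∀ x, |f x| ≤ C := by
      refine ⟨1, fun x => ?_⟩
      by_cases hx : x ∈ A <;> simp [f, hx]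
    have hfTm : Measurable ((T ⁻¹' A).indicator (1 : X → ℝ)) :=
      measurable_one.indicator (hTm hA)
    have hfTb : ∃ C, ∀ x, |(T ⁻¹' A).indicator (1 : X → ℝ) x| ≤ C := by
      refine ⟨1, fun x => ?_⟩
      by_cases hx : x ∈ T ⁻¹' A <;> simp [hx]
    have hcomp : f ∘ T = (T ⁻¹' A).indicator (1 : X → ℝ) := by
      funext x
      by_cases hx : T x ∈ A <;> simp [f, Function.comp, hx]
    have h1 := hcond f hfm hfb
    have h2 := hcond ((T ⁻¹' A).indicator (1 : X → ℝ)) hfTm hfTb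
    obtain ⟨C, hC⟩ := hfb
    have h3 := condexp_comp_invariant μ T hTm hT hfm hC
    rw [hcomp] at h3
    filter_upwards [h1, h2, h3] with x hx1 hx2 hx3
    have e1 : ∫ y, f y ∂(lam x) = ((lam x) A).toReal := integral_indicator_one hA
    have e2 : ∫ y, (T ⁻¹' A).indicator (1 : X → ℝ) y ∂(lam x)
        = ((lam x) (T ⁻¹' A)).toReal := integral_indicator_one (hTm hA)
    have : ((lam x) (T ⁻¹' A)).toReal = ((lam x) A).toReal := by
      rw [← e1, ← e2, hx1, hx2, hx3]
    exact (ENNReal.toReal_eq_toReal_iff' (measure_ne_top _ _) (measure_ne_top _ _)).1 this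
  -- Step 2: upgrade to a.e. equality of measures via a countable generating π-system.
  have hCG : MeasurableSpace.CountablyGenerated X := inferInstance
  set S := MeasurableSpace.countableGeneratingSet X with hS_def
  set P := generatePiSystem S with hP_def
  have hPcount : P.Countable :=
    countable_generatePiSystem' (MeasurableSpace.countable_countableGeneratingSet)
  have hPgen : ‹MeasurableSpace X› = MeasurableSpace.generateFrom P := by
    rw [hP_def, generateFrom_generatePiSystem_eq,
      MeasurableSpace.generateFrom_countableGeneratingSet]
  have hPmeas : ∀ A ∈ P, MeasurableSet A := by
    intro A hAP
    exact generatePiSystem_measurableSet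
      (fun s hs => MeasurableSpace.measurableSet_countableGeneratingSet hs) A hAP
  have hae : ∀ᵐ x ∂μ, ∀ A ∈ P, lam x (T ⁻¹' A) = lam x A :=
    (ae_ball_iff hPcount).2 fun A hAP => key A (hPmeas A hAP)
  filter_upwards [hae] with x hx
  haveI : IsProbabilityMeasure ((lam x).map T) :=
    Measure.isProbabilityMeasure_map hTm.aemeasurable
  refine ext_of_generate_finite P hPgen (isPiSystem_generatePiSystem S) (fun A hAP => ?_) ?_
  · rw [Measure.map_apply hTm (hPmeas A hAP)]
    exact hx A hAP
  · simp [measure_univ]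
end

section
/- Let (X, μ, T) be an ergodic measure-preserving system on a compact metric space and U₁,…,Uₙ pairwise disjoint open sets. Suppose there is a measurable family x ↦ λₓ of T×⋯×T-invariant ergodic measures on Xⁿ forming an ergodic decomposition of μⁿ, such that λₓ(U₁ × ⋯ × Uₙ) ≥ δ > 0 for all x ∈ Xⁿ. Then for every Borel set A with μ(A) > 0 there exist y₁,…,yₙ ∈ A such that the set F = {m ∈ ℕ : T^m yᵢ ∈ Uᵢ for all i} has density at least δ. -/
open Filter MeasureTheory Set Topology
set_option linter.unusedSectionVars false
set_option linter.unusedVariables false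
set_option linter.unnecessarySimpa false

section MaxErg
variable {Y : Type*} [MeasurableSpace Y] {S : Y → Y} {g : Y → ℝ} {ν : Measure Y}

noncomputable def mSup (S : Y → Y) (g : Y → ℝ) : ℕ → Y → ℝ
  | 0 => fun _ => 0
  | (n+1) => fun y => max (mSup S g n y) (birkhoffSum S g (n+1) y)

lemma mSup_nonneg (n : ℕ) (y : Y) : 0 ≤ mSup S g n y := by
  induction n with
  | zero => simp [mSup]
  | succ n ih => exact le_trans ih (le_max_left _ _)

lemma mSup_mono (y : Y) : Monotone fun n => mSup S g n y :=
  monotone_nat_of_le_succ fun n => le_max_left _ _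

lemma birkhoffSum_le_mSup {k n : ℕ} (h : k ≤ n) (y : Y) :
    birkhoffSum S g k y ≤ mSup S g n y := by
  induction n with
  | zero => simp [Nat.le_zero.mp h, mSup]
  | succ n ih =>
    rcases Nat.lt_succ_iff_lt_or_eq.mp (Nat.lt_succ_of_le h) with h' | h'
    · exact le_trans (ih (Nat.lt_succ_iff.mp h')) (le_max_left _ _)
    · rw [h']; exact le_max_right _ _

lemma exists_of_mSup_pos {n : ℕ} {y : Y} (h : 0 < mSup S g n y) :
    ∃ k, 1 ≤ k ∧ k ≤ n ∧ mSup S g n y = birkhoffSum S g k y := by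
  induction n with
  | zero => simp [mSup] at h
  | succ n ih =>
    rcases le_total (mSup S g n y) (birkhoffSum S g (n+1) y) with h' | h'
    · exact ⟨n+1, Nat.succ_le_succ (Nat.zero_le _), le_refl _, max_eq_right h'⟩
    · have hm : mSup S g (n+1) y = mSup S g n y := max_eq_left h'
      rw [hm] at h ⊢
      obtain ⟨k, h1, h2, h3⟩ := ih h
      exact ⟨k, h1, h2.trans (Nat.le_succ _), h3⟩

lemma mSup_le_add {n : ℕ} {y : Y} (h : 0 < mSup S g n y) :
    mSup S g n y ≤ g y + mSup S g n (S y) := by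
  obtain ⟨k, h1, h2, h3⟩ := exists_of_mSup_pos h
  obtain ⟨j, rfl⟩ := Nat.exists_eq_add_of_le h1
  rw [h3, add_comm 1 j, birkhoffSum_succ' S g j y]
  exact add_le_add (le_refl _) (birkhoffSum_le_mSup (by omega : j ≤ n) (S y))

lemma measurable_birkhoffSum (hS : Measurable S) (hg : Measurable g) (n : ℕ) :
    Measurable fun y => birkhoffSum S g n y := by
  unfold birkhoffSum
  exact Finset.measurable_sum _ fun k _ => hg.comp (hS.iterate k)

lemma measurable_mSup (hS : Measurable S) (hg : Measurable g) (n : ℕ) :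
    Measurable (mSup S g n) := by
  induction n with
  | zero => simpa [mSup] using measurable_const
  | succ n ih => exact ih.max (measurable_birkhoffSum hS hg (n+1))

lemma abs_birkhoffSum_le {C : ℝ} (hb : ∀ y, |g y| ≤ C) (n : ℕ) (y : Y) :
    |birkhoffSum S g n y| ≤ n * C := by
  calc |birkhoffSum S g n y| ≤ ∑ k ∈ Finset.range n, |g (S^[k] y)| :=
        Finset.abs_sum_le_sum_abs _ _
    _ ≤ ∑ _k ∈ Finset.range n, C := Finset.sum_le_sum fun k _ => hb _
    _ = n * C := by simp [mul_comm]

lemma mSup_le_bound {C : ℝ} (hC : 0 ≤ C) (hb : ∀ y, |g y| ≤ C) (n : ℕ) (y : Y) :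
    mSup S g n y ≤ n * C := by
  induction n with
  | zero => simp [mSup]
  | succ n ih =>
    refine max_le (ih.trans ?_) ((abs_le.mp (abs_birkhoffSum_le hb (n+1) y)).2)
    have : (n : ℝ) ≤ (n + 1 : ℕ) := by push_cast; linarith
    nlinarith

end MaxErg

section MaxErg2
variable {Y : Type*} [MeasurableSpace Y] {S : Y → Y} {g : Y → ℝ} {ν : Measure Y}

lemma integrable_of_bdd [IsFiniteMeasure ν] {h : Y → ℝ} {C : ℝ} (hm : Measurable h)
    (hb : ∀ y, |h y| ≤ C) : Integrable h ν :=
  (integrable_const C).mono' hm.aestronglyMeasurable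
    (Filter.Eventually.of_forall fun y => by simpa [Real.norm_eq_abs] using hb y)

theorem maximal_ergodic [IsProbabilityMeasure ν] (hS : MeasurePreserving S ν ν)
    (hg : Measurable g) {C : ℝ} (hC : 0 ≤ C) (hb : ∀ y, |g y| ≤ C)
    (hae : ∀ᵐ y ∂ν, ∃ N, 0 < birkhoffSum S g N y) : 0 ≤ ∫ y, g y ∂ν := by
  set E : ℕ → Set Y := fun n => {y | 0 < mSup S g n y} with hE
  have hmm : ∀ n, Measurable (mSup S g n) := measurable_mSup hS.measurable hg
  have hEm : ∀ n, MeasurableSet (E n) := fun n => measurableSet_lt measurable_const (hmm n)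
  have hEmono : Monotone E := fun a b hab y hy => lt_of_lt_of_le hy (mSup_mono y hab)
  have gInt : Integrable g ν := integrable_of_bdd hg hb
  have mInt : ∀ n, Integrable (mSup S g n) ν := fun n =>
    integrable_of_bdd (hmm n) (fun y => abs_le.mpr
      ⟨by linarith [mSup_nonneg (S := S) (g := g) n y, mul_nonneg (Nat.cast_nonneg (α := ℝ) n) hC],
       mSup_le_bound hC hb n y⟩)
  have mSInt : ∀ n, Integrable (fun y => mSup S g n (S y)) ν := fun n =>
    integrable_of_bdd ((hmm n).comp hS.measurable) (fun y => abs_le.mpr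
      ⟨by linarith [mSup_nonneg (S := S) (g := g) n (S y),
          mul_nonneg (Nat.cast_nonneg (α := ℝ) n) hC], mSup_le_bound hC hb n (S y)⟩)
  -- each step
  have step : ∀ n, 0 ≤ ∫ y in E n, g y ∂ν := by
    intro n
    have int_sub : Integrable (fun y => mSup S g n y - mSup S g n (S y)) ν :=
      (mInt n).sub (mSInt n)
    have h1 : ∫ y in E n, (mSup S g n y - mSup S g n (S y)) ∂ν ≤ ∫ y in E n, g y ∂ν := by
      refine setIntegral_mono_on int_sub.integrableOn gInt.integrableOn (hEm n) ?_
      intro y hy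
      have := mSup_le_add (S := S) (g := g) hy
      linarith
    have h2 : ∫ y, (mSup S g n y - mSup S g n (S y)) ∂ν ≤
        ∫ y in E n, (mSup S g n y - mSup S g n (S y)) ∂ν := by
      have hcompl : ∫ y in (E n)ᶜ, (mSup S g n y - mSup S g n (S y)) ∂ν ≤ 0 := by
        refine setIntegral_nonpos (hEm n).compl ?_
        intro y hy
        have h0 : mSup S g n y ≤ 0 := not_lt.mp hy
        have := mSup_nonneg (S := S) (g := g) n (S y)
        linarith
      have := integral_add_compl (hEm n) int_sub
      linarith
    have h3 : ∫ y, (mSup S g n y - mSup S g n (S y)) ∂ν = 0 := by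
      rw [integral_sub (mInt n) (mSInt n)]
      have : ∫ y, mSup S g n (S y) ∂ν = ∫ y, mSup S g n y ∂ν := by
        rw [← hS.map_eq, integral_map hS.measurable.aemeasurable
          ((hmm n).aestronglyMeasurable), hS.map_eq]
      rw [this, sub_self]
    linarith
  -- union is a.e. everything
  have hU : (⋃ n, E n) =ᵐ[ν] (univ : Set Y) := by
    rw [Filter.eventuallyEq_univ]
    filter_upwards [hae] with y hy
    obtain ⟨N, hN⟩ := hy
    exact mem_iUnion.mpr ⟨N, lt_of_lt_of_le hN (birkhoffSum_le_mSup le_rfl y)⟩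
  have hlim := tendsto_setIntegral_of_monotone hEm hEmono gInt.integrableOn
  have : ∫ y in ⋃ n, E n, g y ∂ν = ∫ y, g y ∂ν := by
    rw [Measure.restrict_congr_set hU, Measure.restrict_univ]
  rw [this] at hlim
  exact ge_of_tendsto' hlim step

end MaxErg2

section LimsupHelpers
open Filter

lemma bdd_le_of_abs {u : ℕ → ℝ} {K : ℝ} (hu : ∀ n, |u n| ≤ K) :
    IsBoundedUnder (· ≤ ·) atTop u :=
  isBoundedUnder_of ⟨K, fun n => (abs_le.mp (hu n)).2⟩

lemma bdd_ge_of_abs {u : ℕ → ℝ} {K : ℝ} (hu : ∀ n, |u n| ≤ K) :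
    IsBoundedUnder (· ≥ ·) atTop u :=
  isBoundedUnder_of ⟨-K, fun n => (abs_le.mp (hu n)).1⟩

lemma real_le_of_forall_pos_le_add {a b : ℝ} (h : ∀ ε : ℝ, 0 < ε → a ≤ b + ε) : a ≤ b := by
  by_contra hc
  push_neg at hc
  have := h ((a - b) / 2) (by linarith)
  linarith

lemma limsup_le_limsup_of_tendsto_sub {u v : ℕ → ℝ} {K : ℝ} (hu : ∀ n, |u n| ≤ K)
    (hv : ∀ n, |v n| ≤ K) (h : Tendsto (fun n => u n - v n) atTop (𝓝 0)) :
    limsup u atTop ≤ limsup v atTop := by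
  refine real_le_of_forall_pos_le_add fun ε hε => ?_
  have hev : ∀ᶠ n in atTop, u n ≤ v n + ε := by
    filter_upwards [h.eventually_lt_const hε] with n hn
    linarith
  calc limsup u atTop ≤ limsup (fun n => v n + ε) atTop :=
        limsup_le_limsup hev ((bdd_ge_of_abs hu).isCoboundedUnder_le)
          (isBoundedUnder_of ⟨K + ε, fun n => by linarith [(abs_le.mp (hv n)).2]⟩)
    _ = limsup v atTop + ε := limsup_add_const atTop v ε (bdd_le_of_abs hv)
          ((bdd_ge_of_abs hv).isCoboundedUnder_le)

lemma limsup_eq_limsup_of_tendsto_sub {u v : ℕ → ℝ} {K : ℝ} (hu : ∀ n, |u n| ≤ K)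
    (hv : ∀ n, |v n| ≤ K) (h : Tendsto (fun n => u n - v n) atTop (𝓝 0)) :
    limsup u atTop = limsup v atTop := by
  refine le_antisymm (limsup_le_limsup_of_tendsto_sub hu hv h)
    (limsup_le_limsup_of_tendsto_sub hv hu ?_)
  have : (fun n => v n - u n) = fun n => -(u n - v n) := by funext n; ring
  rw [this]
  simpa using h.neg

lemma liminf_le_liminf_of_tendsto_sub {u v : ℕ → ℝ} {K : ℝ} (hu : ∀ n, |u n| ≤ K)
    (hv : ∀ n, |v n| ≤ K) (h : Tendsto (fun n => u n - v n) atTop (𝓝 0)) :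
    liminf u atTop ≤ liminf v atTop := by
  refine real_le_of_forall_pos_le_add fun ε hε => ?_
  have hev : ∀ᶠ n in atTop, u n ≤ v n + ε := by
    filter_upwards [h.eventually_lt_const hε] with n hn
    linarith
  calc liminf u atTop ≤ liminf (fun n => v n + ε) atTop :=
        liminf_le_liminf hev (bdd_ge_of_abs hu)
          ((isBoundedUnder_of ⟨K + ε, fun n => by linarith [(abs_le.mp (hv n)).2]⟩ :
            IsBoundedUnder (· ≤ ·) atTop fun n => v n + ε).isCoboundedUnder_ge)
    _ = liminf v atTop + ε := liminf_add_const atTop v ε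
          ((bdd_le_of_abs hv).isCoboundedUnder_ge) (bdd_ge_of_abs hv)

lemma liminf_eq_liminf_of_tendsto_sub {u v : ℕ → ℝ} {K : ℝ} (hu : ∀ n, |u n| ≤ K)
    (hv : ∀ n, |v n| ≤ K) (h : Tendsto (fun n => u n - v n) atTop (𝓝 0)) :
    liminf u atTop = liminf v atTop := by
  refine le_antisymm (liminf_le_liminf_of_tendsto_sub hu hv h)
    (liminf_le_liminf_of_tendsto_sub hv hu ?_)
  have : (fun n => v n - u n) = fun n => -(u n - v n) := by funext n; ring
  rw [this]
  simpa using h.neg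

end LimsupHelpers

section Birkhoff
variable {Y : Type*} [MeasurableSpace Y] {S : Y → Y} {ν : Measure Y}

theorem birkhoff_ergodic [IsProbabilityMeasure ν] (hS : Ergodic S ν) {f : Y → ℝ}
    (hf : Measurable f) (hb : ∀ y, |f y| ≤ 1) :
    ∀ᵐ y ∂ν, Tendsto (fun N : ℕ => birkhoffSum S f N y / N) atTop (𝓝 (∫ z, f z ∂ν)) := by
  set A : ℕ → Y → ℝ := fun N y => birkhoffSum S f N y / N with hA
  have hAbd : ∀ y N, |A N y| ≤ 1 := by
    intro y N
    rcases Nat.eq_zero_or_pos N with rfl | hN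
    · simp [hA]
    · have h1 := abs_birkhoffSum_le (S := S) hb N y
      have hNpos : (0:ℝ) < N := by exact_mod_cast hN
      rw [hA]
      simp only [abs_div, abs_of_pos hNpos, div_le_one hNpos]
      linarith
  have hAm : ∀ N, Measurable (A N) :=
    fun N => (measurable_birkhoffSum hS.measurable hf N).div_const _
  set φ : Y → ℝ := fun y => limsup (fun N => A N y) atTop with hφ
  set ψ : Y → ℝ := fun y => liminf (fun N => A N y) atTop with hψ
  have hφm : Measurable φ := Measurable.limsup fun N => hAm N
  have hψm : Measurable ψ := Measurable.liminf fun N => hAm N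
  have shift : ∀ y, Tendsto (fun N => A N (S y) - A N y) atTop (𝓝 0) := by
    intro y
    apply squeeze_zero_norm (a := fun N : ℕ => 2 / N)
      (fun N => ?_) (tendsto_const_div_atTop_nhds_zero_nat 2)
    have : A N (S y) - A N y = (f (S^[N] y) - f y) / N := by
      rw [hA]
      simp only
      rw [div_sub_div_same, birkhoffSum_apply_sub_birkhoffSum]
    rw [Real.norm_eq_abs, this, abs_div, abs_of_nonneg (Nat.cast_nonneg (α := ℝ) N)]
    rcases Nat.eq_zero_or_pos N with rfl | hN
    · simp
    · have hnum : |f (S^[N] y) - f y| ≤ 2 := by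
        calc |f (S^[N] y) - f y| ≤ |f (S^[N] y)| + |f y| := abs_sub _ _
          _ ≤ 2 := by linarith [hb (S^[N] y), hb y]
      have hN' : (0:ℝ) < N := by exact_mod_cast hN
      exact (div_le_div_iff_of_pos_right hN').mpr hnum
  have hφS : ∀ y, φ (S y) = φ y := fun y =>
    limsup_eq_limsup_of_tendsto_sub (K := 1) (fun N => hAbd (S y) N) (fun N => hAbd y N)
      (shift y)
  have hψS : ∀ y, ψ (S y) = ψ y := fun y =>
    liminf_eq_liminf_of_tendsto_sub (K := 1) (fun N => hAbd (S y) N) (fun N => hAbd y N)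
      (shift y)
  obtain ⟨c₁, hc₁⟩ := hS.ae_eq_const_of_ae_eq_comp₀ hφm.nullMeasurable
    (Filter.Eventually.of_forall fun y => hφS y)
  obtain ⟨c₂, hc₂⟩ := hS.ae_eq_const_of_ae_eq_comp₀ hψm.nullMeasurable
    (Filter.Eventually.of_forall fun y => hψS y)
  set I : ℝ := ∫ z, f z ∂ν with hI
  have hfInt : Integrable f ν := integrable_of_bdd hf hb
  have sum_sub_const : ∀ (c : ℝ) (N : ℕ) (y : Y),
      birkhoffSum S (fun z => f z - c) N y = birkhoffSum S f N y - N * c := by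
    intro c N y
    simp [birkhoffSum, Finset.sum_sub_distrib, mul_comm]
  have sum_const_sub : ∀ (c : ℝ) (N : ℕ) (y : Y),
      birkhoffSum S (fun z => c - f z) N y = N * c - birkhoffSum S f N y := by
    intro c N y
    simp [birkhoffSum, Finset.sum_sub_distrib, mul_comm]
  -- upper bound : c₁ ≤ I
  have upper : c₁ ≤ I := by
    refine real_le_of_forall_pos_le_add fun ε hε => ?_
    have hgm : Measurable fun y => f y - (c₁ - ε) := hf.sub measurable_const
    have hgb : ∀ y, |f y - (c₁ - ε)| ≤ 1 + |c₁ - ε| := fun y => by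
      calc |f y - (c₁ - ε)| ≤ |f y| + |c₁ - ε| := abs_sub _ _
        _ ≤ 1 + |c₁ - ε| := by linarith [hb y]
    have hmax := maximal_ergodic hS.toMeasurePreserving hgm
      (C := 1 + |c₁ - ε|) (by positivity) hgb ?_
    · rw [integral_sub hfInt (integrable_const _), integral_const] at hmax
      simp only [probReal_univ, measure_univ, ENNReal.toReal_one, one_smul] at hmax
      rw [← hI] at hmax
      linarith
    · filter_upwards [hc₁] with y hy
      have hlt : c₁ - ε < limsup (fun N => A N y) atTop := by
        have : limsup (fun N => A N y) atTop = c₁ := hy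
        rw [this]; linarith
      have hfreq := frequently_lt_of_lt_limsup
        ((bdd_ge_of_abs (fun N => hAbd y N)).isCoboundedUnder_le) hlt
      obtain ⟨N, hN1, hN2⟩ := (hfreq.and_eventually (eventually_ge_atTop 1)).exists
      refine ⟨N, ?_⟩
      rw [sum_sub_const]
      have hNpos : (0:ℝ) < N := by exact_mod_cast hN2
      have : (c₁ - ε) * N < birkhoffSum S f N y := by
        have h' : c₁ - ε < birkhoffSum S f N y / N := hN1
        exact (lt_div_iff₀ hNpos).mp h'
      nlinarith
  -- lower bound : I ≤ c₂
  have lower : I ≤ c₂ := by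
    refine real_le_of_forall_pos_le_add fun ε hε => ?_
    have hgm : Measurable fun y => (c₂ + ε) - f y := measurable_const.sub hf
    have hgb : ∀ y, |(c₂ + ε) - f y| ≤ 1 + |c₂ + ε| := fun y => by
      calc |(c₂ + ε) - f y| ≤ |c₂ + ε| + |f y| := abs_sub _ _
        _ ≤ 1 + |c₂ + ε| := by linarith [hb y]
    have hmax := maximal_ergodic hS.toMeasurePreserving hgm
      (C := 1 + |c₂ + ε|) (by positivity) hgb ?_
    · rw [integral_sub (integrable_const _) hfInt, integral_const] at hmax
      simp only [probReal_univ, measure_univ, ENNReal.toReal_one, one_smul] at hmax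
      rw [← hI] at hmax
      linarith
    · filter_upwards [hc₂] with y hy
      have hlt : liminf (fun N => A N y) atTop < c₂ + ε := by
        have : liminf (fun N => A N y) atTop = c₂ := hy
        rw [this]; linarith
      have hfreq := frequently_lt_of_liminf_lt
        ((bdd_le_of_abs (fun N => hAbd y N)).isCoboundedUnder_ge) hlt
      obtain ⟨N, hN1, hN2⟩ := (hfreq.and_eventually (eventually_ge_atTop 1)).exists
      refine ⟨N, ?_⟩
      rw [sum_const_sub]
      have hNpos : (0:ℝ) < N := by exact_mod_cast hN2
      have : birkhoffSum S f N y < (c₂ + ε) * N := by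
        have h' : birkhoffSum S f N y / N < c₂ + ε := hN1
        exact (div_lt_iff₀ hNpos).mp h'
      nlinarith
  -- middle : c₂ ≤ c₁
  have mid : c₂ ≤ c₁ := by
    have hne : (ae ν).NeBot := ae_neBot.mpr (IsProbabilityMeasure.ne_zero ν)
    obtain ⟨y, h1, h2⟩ := (hc₁.and hc₂).exists
    have := liminf_le_limsup (u := fun N => A N y) (f := atTop)
      (bdd_le_of_abs fun N => hAbd y N) (bdd_ge_of_abs fun N => hAbd y N)
    have e1 : limsup (fun N => A N y) atTop = c₁ := h1
    have e2 : liminf (fun N => A N y) atTop = c₂ := h2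
    linarith
  have hc1I : c₁ = I := le_antisymm upper (lower.trans mid)
  have hc2I : c₂ = I := le_antisymm (mid.trans upper) lower
  filter_upwards [hc₁, hc₂] with y h1 h2
  refine tendsto_of_liminf_eq_limsup ?_ ?_
    (bdd_le_of_abs fun N => hAbd y N) (bdd_ge_of_abs fun N => hAbd y N)
  · have : liminf (fun N => A N y) atTop = c₂ := h2
    rw [this, hc2I]
  · have : limsup (fun N => A N y) atTop = c₁ := h1
    rw [this, hc1I]

end Birkhoff

theorem stmt14 {X : Type*} [MetricSpace X] [CompactSpace X] [MeasurableSpace X] [BorelSpace X]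
    (T : X → X) (hTc : Continuous T)
    (μ : Measure X) [IsProbabilityMeasure μ] (hμ : Ergodic T μ)
    (n : ℕ) (hn : 2 ≤ n)
    (U : Fin n → Set X) (hUo : ∀ i, IsOpen (U i))
    (hUdisj : Pairwise fun i j => Disjoint (U i) (U j))
    (lam : (Fin n → X) → Measure (Fin n → X)) (hlam : Measurable lam)
    [∀ x, IsProbabilityMeasure (lam x)]
    (hbind : (Measure.pi fun _ : Fin n => μ).bind lam = Measure.pi fun _ : Fin n => μ)
    (herg : ∀ᵐ x ∂(Measure.pi fun _ : Fin n => μ),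
      Ergodic (fun y : Fin n → X => fun i => T (y i)) (lam x))
    (δ : ℝ) (hδ : 0 < δ)
    (hbig : ∀ x : Fin n → X, δ ≤ (lam x (Set.univ.pi U)).toReal)
    (A : Set X) (hA : MeasurableSet A) (hApos : 0 < μ A) :
    ∃ y : Fin n → X, (∀ i, y i ∈ A) ∧
      ∃ c : ℝ, δ ≤ c ∧
        Tendsto (fun N : ℕ =>
            (({m : ℕ | ∀ i, T^[m] (y i) ∈ U i} ∩ Set.Iio N).ncard : ℝ) / N)
          atTop (nhds c) := by
  classical
  set ν : Measure (Fin n → X) := Measure.pi fun _ : Fin n => μ with hν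
  set S : (Fin n → X) → (Fin n → X) := fun y i => T (y i) with hSdef
  have hSm : Measurable S :=
    measurable_pi_lambda _ fun i => hTc.measurable.comp (measurable_pi_apply i)
  have hVm : MeasurableSet (Set.univ.pi U) := MeasurableSet.univ_pi fun i => (hUo i).measurableSet
  set A' : Set (Fin n → X) := Set.univ.pi fun _ => A with hA'def
  have hA'm : MeasurableSet A' := MeasurableSet.univ_pi fun _ => hA
  have hA'pos : ν A' ≠ 0 := by
    rw [hν, hA'def, Measure.pi_pi]
    exact Finset.prod_ne_zero_iff.mpr fun i _ => hApos.ne'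
  have hmeas_lamA' : Measurable fun x => lam x A' := (Measure.measurable_coe hA'm).comp hlam
  have hbindA' : ∫⁻ x, lam x A' ∂ν = ν A' := by
    conv_rhs => rw [← hbind]
    rw [Measure.bind_apply hA'm hlam.aemeasurable]
  have hfreq : ∃ᶠ x in ae ν, lam x A' ≠ 0 := by
    by_contra hcon
    rw [Filter.not_frequently] at hcon
    have h0 : ∫⁻ x, lam x A' ∂ν = 0 := by
      rw [lintegral_eq_zero_iff hmeas_lamA']
      filter_upwards [hcon] with z hz
      simpa using not_not.mp hz
    exact hA'pos (by rw [← hbindA', h0])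
  obtain ⟨x, hx1, hx2⟩ := (hfreq.and_eventually herg).exists
  set f₀ : (Fin n → X) → ℝ := (Set.univ.pi U).indicator 1 with hf₀
  have hf₀m : Measurable f₀ := measurable_one.indicator hVm
  have hf₀b : ∀ y, |f₀ y| ≤ 1 := by
    intro y
    by_cases h : y ∈ Set.univ.pi U <;> simp [hf₀, Set.indicator_apply, h]
  have hbirk := birkhoff_ergodic hx2 hf₀m hf₀b
  have hint : ∫ z, f₀ z ∂(lam x) = (lam x (Set.univ.pi U)).toReal := by
    rw [hf₀]; exact integral_indicator_one hVm
  rw [hint] at hbirk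
  have hex : ∃ y ∈ A', Tendsto (fun N : ℕ => birkhoffSum S f₀ N y / N) atTop
      (𝓝 ((lam x (Set.univ.pi U)).toReal)) := by
    by_contra hcon
    push_neg at hcon
    refine hx1 (measure_mono_null (fun y hy => ?_) (ae_iff.mp hbirk))
    exact hcon y hy
  obtain ⟨y, hyA', hy2⟩ := hex
  refine ⟨y, fun i => Set.mem_univ_pi.mp hyA' i, (lam x (Set.univ.pi U)).toReal, hbig x, ?_⟩
  have hiter : ∀ (m : ℕ) (i : Fin n), (S^[m] y) i = T^[m] (y i) := by
    intro m
    induction m with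
    | zero => intro i; simp
    | succ m ih =>
      intro i
      rw [Function.iterate_succ_apply', Function.iterate_succ_apply', ← ih i, hSdef]
  have key : ∀ N : ℕ, (({m : ℕ | ∀ i, T^[m] (y i) ∈ U i} ∩ Set.Iio N).ncard : ℝ)
      = birkhoffSum S f₀ N y := by
    intro N
    have hset : ({m : ℕ | ∀ i, T^[m] (y i) ∈ U i} ∩ Set.Iio N) =
        ↑(Finset.filter (fun m => S^[m] y ∈ Set.univ.pi U) (Finset.range N)) := by
      ext m
      simp only [Set.mem_inter_iff, Set.mem_setOf_eq, Set.mem_Iio, Finset.coe_filter,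
        Finset.mem_range, Set.mem_pi, Set.mem_univ, true_implies]
      constructor
      · rintro ⟨h1, h2⟩; exact ⟨h2, fun i => (hiter m i).symm ▸ h1 i⟩
      · rintro ⟨h1, h2⟩; exact ⟨fun i => (hiter m i) ▸ h2 i, h1⟩
    rw [hset, Set.ncard_coe_finset, Finset.card_filter]
    push_cast
    rw [hf₀]
    simp [birkhoffSum, Set.indicator_apply]
  have heq : (fun N : ℕ => (({m : ℕ | ∀ i, T^[m] (y i) ∈ U i} ∩ Set.Iio N).ncard : ℝ) / N)
      = fun N : ℕ => birkhoffSum S f₀ N y / N := funext fun N => by rw [key N]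
  rw [heq]
  exact hy2
end

section
/- Let X, H be compact metric spaces and π : X → H a continuous surjection such that the set of points x ∈ X with π⁻¹(π(x)) = {x} is dense in X. Then for every compact subset U of X with cl(int U) = U (i.e., U is regular closed), the image π(U) satisfies cl(int π(U)) = π(U); in particular images of proper regular closed sets under π are proper. -/
/-!
Points whose fibre is a singleton are mapped by a closed surjection into the interior of the
image of any neighbourhood of them. Density of such points in the open set `interior U` gives
`U = closure (interior U) = closure (interior U ∩ S)` for the set `S` of these points, and hence
`f '' U ⊆ closure (f '' (interior U ∩ S)) ⊆ closure (interior (f '' U))`.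
-/

open Set Function

section

variable {X Y : Type*} [TopologicalSpace X] [TopologicalSpace Y] {f : X → Y}

theorem IsClosedMap.mem_interior_image_of_preimage_singleton (hf : IsClosedMap f)
    (hsurj : Surjective f) {U : Set X} {x : X} (hx : x ∈ interior U)
    (hfib : f ⁻¹' {f x} = {x}) : f x ∈ interior (f '' U) := by
  refine mem_interior.mpr
    ⟨(f '' (interior U)ᶜ)ᶜ, ?_, (hf _ isOpen_interior.isClosed_compl).isOpen_compl, ?_⟩
  · calc (f '' (interior U)ᶜ)ᶜ ⊆ f '' (interior U)ᶜᶜ := subset_image_compl hsurj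
      _ = f '' interior U := by rw [compl_compl]
      _ ⊆ f '' U := image_mono interior_subset
  · rintro ⟨z, hz, hzx⟩
    have hz_fib : z ∈ f ⁻¹' {f x} := hzx
    rw [hfib, mem_singleton_iff] at hz_fib
    exact hz (hz_fib ▸ hx)

theorem IsClosedMap.closure_interior_image_eq (hc : Continuous f) (hf : IsClosedMap f)
    (hsurj : Surjective f) (hdense : Dense {x : X | f ⁻¹' {f x} = {x}}) {U : Set X}
    (hreg : closure (interior U) = U) : closure (interior (f '' U)) = f '' U := by
  set S : Set X := {x : X | f ⁻¹' {f x} = {x}}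
  have hU_closed : IsClosed U := hreg ▸ isClosed_closure
  refine (closure_minimal interior_subset (hf U hU_closed)).antisymm ?_
  have hS_image : f '' (interior U ∩ S) ⊆ interior (f '' U) := by
    rintro _ ⟨x, ⟨hxU, hxS⟩, rfl⟩
    exact hf.mem_interior_image_of_preimage_singleton hsurj hxU hxS
  calc f '' U = f '' closure (interior U) := by rw [hreg]
    _ ⊆ f '' closure (interior U ∩ S) :=
        image_mono (closure_minimal (hdense.open_subset_closure_inter isOpen_interior)
          isClosed_closure)
    _ ⊆ closure (f '' (interior U ∩ S)) := image_closure_subset_closure_image hc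
    _ ⊆ closure (interior (f '' U)) := closure_mono hS_image

end

theorem stmt16_general {X H : Type*} [MetricSpace X] [CompactSpace X] [MetricSpace H]
    (π : X → H) (hc : Continuous π) (hs : Function.Surjective π)
    (hdense : Dense {x : X | π ⁻¹' {π x} = {x}})
    (U : Set X) (hreg : closure (interior U) = U) :
    closure (interior (π '' U)) = π '' U :=
  hc.isClosedMap.closure_interior_image_eq hc hs hdense hreg

theorem stmt16 {X H : Type*} [MetricSpace X] [CompactSpace X] [MetricSpace H] [CompactSpace H]
    (π : X → H) (hc : Continuous π) (hs : Function.Surjective π)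
    (hdense : Dense {x : X | π ⁻¹' {π x} = {x}})
    (U : Set X) (hU : IsCompact U) (hreg : closure (interior U) = U) :
    closure (interior (π '' U)) = π '' U :=
  stmt16_general π hc hs hdense U hreg
end
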